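/- Let Z be a set containing distinct elements a, b, a', b', x, y, and let X = Z^ℕ. For each z ∈ Z let ω_z : X → X be the prepend map, and let σ_x, σ_y be the constant streams with value x and y. There is no complete transitive relation ≽* on X that is coherent under each ω_z (σ ≽* τ implies ω_z(σ) ≽* ω_z(τ), and σ ≻* τ implies ω_z(σ) ≻* ω_z(τ), for every z ∈ Z) and satisfies all four strict rankings: ω_a(σ_x) ≻* ω_b(σ_y), ω_b(σ_x) ≻* ω_a(σ_y), ω_{a'}(σ_y) ≻* ω_{b'}(σ_x), and ω_{b'}(σ_y) ≻* ω_{a'}(σ_x). In particular, there is a stationary (coherent under all prepend maps) preorder on X that admits no stationary complete preorder extension. -/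
import Mathlib


/-- The strict part of a binary relation: `x ≻ y` iff `x ≽ y` and not `y ≽ x`. -/
def StrictRel {X : Type*} (R : X → X → Prop) (x y : X) : Prop := R x y ∧ ¬ R y x

/-- `R'` is an extension of `R`. -/
def IsExtension {X : Type*} (R R' : X → X → Prop) : Prop :=
  (∀ x y, R x y → R' x y) ∧ (∀ x y, StrictRel R x y → StrictRel R' x y)

/-- Prepending a prize `z` to a consumption stream: `ω_z(σ) = (z, σ₁, σ₂, …)`. -/
def prepend {Z : Type*} (z : Z) (σ : ℕ → Z) : ℕ → Z
  | 0 => z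
  | n + 1 => σ n

/-- A relation on streams is stationary if it is coherent under every prepend map. -/
def StationaryStream {Z : Type*} (R : (ℕ → Z) → (ℕ → Z) → Prop) : Prop :=
  ∀ (z : Z) (σ τ : ℕ → Z),
    (R σ τ → R (prepend z σ) (prepend z τ)) ∧
    (StrictRel R σ τ → StrictRel R (prepend z σ) (prepend z τ))

namespace NoStatAux

variable {Z : Type*}

lemma prepend_inj {z w : Z} {σ τ : ℕ → Z} (h : prepend z σ = prepend w τ) :
    z = w ∧ σ = τ := by
  refine ⟨congrFun h 0, funext fun n => congrFun h (n + 1)⟩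

/-- Generating relation: the four strict rankings, closed under prepending. -/
inductive Gen (a b a' b' x y : Z) : (ℕ → Z) → (ℕ → Z) → Prop
  | g1 : Gen a b a' b' x y (prepend a fun _ => x) (prepend b fun _ => y)
  | g2 : Gen a b a' b' x y (prepend b fun _ => x) (prepend a fun _ => y)
  | g3 : Gen a b a' b' x y (prepend a' fun _ => y) (prepend b' fun _ => x)
  | g4 : Gen a b a' b' x y (prepend b' fun _ => y) (prepend a' fun _ => x)
  | pre (z : Z) (σ τ : ℕ → Z) : Gen a b a' b' x y σ τ →
      Gen a b a' b' x y (prepend z σ) (prepend z τ)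

/-- Left mark: the shape of any stream appearing on the left of `Gen`. -/
def LMark (a b a' b' x y : Z) (s : ℕ → Z) : Prop :=
  ∃ n, ((s n = a ∨ s n = b) ∧ ∀ m, n < m → s m = x) ∨
       ((s n = a' ∨ s n = b') ∧ ∀ m, n < m → s m = y)

/-- Right mark: the shape of any stream appearing on the right of `Gen`. -/
def RMark (a b a' b' x y : Z) (s : ℕ → Z) : Prop :=
  ∃ n, ((s n = a ∨ s n = b) ∧ ∀ m, n < m → s m = y) ∨
       ((s n = a' ∨ s n = b') ∧ ∀ m, n < m → s m = x)

lemma tail_const {z v : Z} : ∀ m, 0 < m → prepend z (fun _ => v) m = v := by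
  intro m hm
  cases m with
  | zero => omega
  | succ k => rfl

lemma lmark_pre {a b a' b' x y z : Z} {s : ℕ → Z} (h : LMark a b a' b' x y s) :
    LMark a b a' b' x y (prepend z s) := by
  obtain ⟨n, h⟩ := h
  refine ⟨n + 1, ?_⟩
  rcases h with ⟨h1, h2⟩ | ⟨h1, h2⟩
  · refine Or.inl ⟨h1, fun m hm => ?_⟩
    cases m with
    | zero => omega
    | succ k => exact h2 k (by omega)
  · refine Or.inr ⟨h1, fun m hm => ?_⟩
    cases m with
    | zero => omega
    | succ k => exact h2 k (by omega)

lemma rmark_pre {a b a' b' x y z : Z} {s : ℕ → Z} (h : RMark a b a' b' x y s) :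
    RMark a b a' b' x y (prepend z s) := by
  obtain ⟨n, h⟩ := h
  refine ⟨n + 1, ?_⟩
  rcases h with ⟨h1, h2⟩ | ⟨h1, h2⟩
  · refine Or.inl ⟨h1, fun m hm => ?_⟩
    cases m with
    | zero => omega
    | succ k => exact h2 k (by omega)
  · refine Or.inr ⟨h1, fun m hm => ?_⟩
    cases m with
    | zero => omega
    | succ k => exact h2 k (by omega)

lemma gen_marks {a b a' b' x y : Z} {σ τ : ℕ → Z} (h : Gen a b a' b' x y σ τ) :
    LMark a b a' b' x y σ ∧ RMark a b a' b' x y τ := by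
  induction h with
  | g1 => exact ⟨⟨0, Or.inl ⟨Or.inl rfl, fun m hm => tail_const m hm⟩⟩,
      ⟨0, Or.inl ⟨Or.inr rfl, fun m hm => tail_const m hm⟩⟩⟩
  | g2 => exact ⟨⟨0, Or.inl ⟨Or.inr rfl, fun m hm => tail_const m hm⟩⟩,
      ⟨0, Or.inl ⟨Or.inl rfl, fun m hm => tail_const m hm⟩⟩⟩
  | g3 => exact ⟨⟨0, Or.inr ⟨Or.inl rfl, fun m hm => tail_const m hm⟩⟩,
      ⟨0, Or.inr ⟨Or.inr rfl, fun m hm => tail_const m hm⟩⟩⟩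
  | g4 => exact ⟨⟨0, Or.inr ⟨Or.inr rfl, fun m hm => tail_const m hm⟩⟩,
      ⟨0, Or.inr ⟨Or.inl rfl, fun m hm => tail_const m hm⟩⟩⟩
  | pre z σ τ _ ih => exact ⟨lmark_pre ih.1, rmark_pre ih.2⟩

/-- A stream cannot simultaneously carry a left mark and a right mark. -/
lemma marks_clash {a b a' b' x y : Z}
    (haa' : a ≠ a') (hab' : a ≠ b') (hba' : b ≠ a') (hbb' : b ≠ b')
    (hax : a ≠ x) (hay : a ≠ y) (hbx : b ≠ x) (hby : b ≠ y)
    (ha'x : a' ≠ x) (ha'y : a' ≠ y) (hb'x : b' ≠ x) (hb'y : b' ≠ y)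
    (hxy : x ≠ y) {s : ℕ → Z}
    (hl : LMark a b a' b' x y s) (hr : RMark a b a' b' x y s) : False := by
  obtain ⟨n, hl⟩ := hl
  obtain ⟨n', hr⟩ := hr
  rcases hl with ⟨h1, h2⟩ | ⟨h1, h2⟩ <;> rcases hr with ⟨g1, g2⟩ | ⟨g1, g2⟩
  · -- left tail x, right tail y
    have hA := h2 (max n n' + 1) (by omega)
    have hB := g2 (max n n' + 1) (by omega)
    exact hxy (hA.symm.trans hB)
  · -- left (a/b, x), right (a'/b', x)
    rcases lt_trichotomy n n' with h | h | h
    · have hv := h2 n' h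
      rcases g1 with g | g
      · exact ha'x (g.symm.trans hv)
      · exact hb'x (g.symm.trans hv)
    · subst h
      rcases h1 with h | h <;> rcases g1 with g | g
      · exact haa' (h.symm.trans g)
      · exact hab' (h.symm.trans g)
      · exact hba' (h.symm.trans g)
      · exact hbb' (h.symm.trans g)
    · have hv := g2 n h
      rcases h1 with h | h
      · exact hax (h.symm.trans hv)
      · exact hbx (h.symm.trans hv)
  · -- left (a'/b', y), right (a/b, y)
    rcases lt_trichotomy n n' with h | h | h
    · have hv := h2 n' h
      rcases g1 with g | g
      · exact hay (g.symm.trans hv)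
      · exact hby (g.symm.trans hv)
    · subst h
      rcases h1 with h | h <;> rcases g1 with g | g
      · exact haa' (g.symm.trans h)
      · exact hba' (g.symm.trans h)
      · exact hab' (g.symm.trans h)
      · exact hbb' (g.symm.trans h)
    · have hv := g2 n h
      rcases h1 with h | h
      · exact ha'y (h.symm.trans hv)
      · exact hb'y (h.symm.trans hv)
  · -- left tail y, right tail x
    have hA := h2 (max n n' + 1) (by omega)
    have hB := g2 (max n n' + 1) (by omega)
    exact hxy (hB.symm.trans hA)

/-- Inverting `Gen` under a common prepend. -/
lemma gen_prepend_inv {a b a' b' x y : Z} (hab : a ≠ b) (ha'b' : a' ≠ b') (z : Z)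
    {σ τ : ℕ → Z} (h : Gen a b a' b' x y (prepend z σ) (prepend z τ)) :
    Gen a b a' b' x y σ τ := by
  generalize hσ : prepend z σ = s at h
  generalize hτ : prepend z τ = t at h
  cases h with
  | g1 => exact absurd ((prepend_inj hσ).1.symm.trans (prepend_inj hτ).1) hab
  | g2 => exact absurd ((prepend_inj hτ).1.symm.trans (prepend_inj hσ).1) hab
  | g3 => exact absurd ((prepend_inj hσ).1.symm.trans (prepend_inj hτ).1) ha'b'
  | g4 => exact absurd ((prepend_inj hτ).1.symm.trans (prepend_inj hσ).1) ha'b'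
  | pre w σ' τ' h' =>
    obtain ⟨rfl, rfl⟩ := prepend_inj hσ
    obtain ⟨-, rfl⟩ := prepend_inj hτ
    exact h'

end NoStatAux

open NoStatAux in
/-- On `X = Z^ℕ` with distinct prizes `a, b, a', b', x, y`: (i) no complete transitive
stationary relation can satisfy the four strict rankings `ω_a(σ_x) ≻ ω_b(σ_y)`,
`ω_b(σ_x) ≻ ω_a(σ_y)`, `ω_{a'}(σ_y) ≻ ω_{b'}(σ_x)`, `ω_{b'}(σ_y) ≻ ω_{a'}(σ_x)`;
(ii) hence some stationary preorder on `X` has no stationary complete preorder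
extension. -/
theorem no_stationary_completion {Z : Type*} (a b a' b' x y : Z)
    (hdist : List.Pairwise (· ≠ ·) [a, b, a', b', x, y]) :
    (¬ ∃ R : (ℕ → Z) → (ℕ → Z) → Prop,
      (∀ σ τ, R σ τ ∨ R τ σ) ∧ Transitive R ∧ StationaryStream R ∧
      StrictRel R (prepend a fun _ => x) (prepend b fun _ => y) ∧
      StrictRel R (prepend b fun _ => x) (prepend a fun _ => y) ∧
      StrictRel R (prepend a' fun _ => y) (prepend b' fun _ => x) ∧
      StrictRel R (prepend b' fun _ => y) (prepend a' fun _ => x)) ∧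
    (∃ R₀ : (ℕ → Z) → (ℕ → Z) → Prop, Reflexive R₀ ∧ Transitive R₀ ∧
      StationaryStream R₀ ∧
      ¬ ∃ R' : (ℕ → Z) → (ℕ → Z) → Prop, IsExtension R₀ R' ∧ Reflexive R' ∧
        Transitive R' ∧ (∀ σ τ, R' σ τ ∨ R' τ σ) ∧ StationaryStream R') := by
  simp only [List.pairwise_cons, List.mem_cons, List.mem_singleton, List.not_mem_nil,
    or_false, forall_eq_or_imp, forall_eq, List.Pairwise.nil] at hdist
  obtain ⟨⟨hab, haa', hab', hax, hay⟩, ⟨hba', hbb', hbx, hby⟩, ⟨ha'b', ha'x, ha'y⟩,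
    ⟨hb'x, hb'y⟩, hxy, -⟩ := hdist
  -- Part (i)
  have part1 : ¬ ∃ R : (ℕ → Z) → (ℕ → Z) → Prop,
      (∀ σ τ, R σ τ ∨ R τ σ) ∧ Transitive R ∧ StationaryStream R ∧
      StrictRel R (prepend a fun _ => x) (prepend b fun _ => y) ∧
      StrictRel R (prepend b fun _ => x) (prepend a fun _ => y) ∧
      StrictRel R (prepend a' fun _ => y) (prepend b' fun _ => x) ∧
      StrictRel R (prepend b' fun _ => y) (prepend a' fun _ => x) := by
    rintro ⟨R, hcomp, htrans, hstat, h1, h2, h3, h4⟩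
    rcases hcomp (fun _ => x) (fun _ => y) with h | h
    · -- σx ≽ σy : use primed rankings
      have hB : R (prepend b' fun _ => x) (prepend b' fun _ => y) := (hstat b' _ _).1 h
      have hA : R (prepend a' fun _ => x) (prepend a' fun _ => y) := (hstat a' _ _).1 h
      exact h3.2 (htrans (htrans hB h4.1) hA)
    · -- σy ≽ σx : use unprimed rankings
      have hB : R (prepend b fun _ => y) (prepend b fun _ => x) := (hstat b _ _).1 h
      have hA : R (prepend a fun _ => y) (prepend a fun _ => x) := (hstat a _ _).1 h
      exact h1.2 (htrans (htrans hB h2.1) hA)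
  refine ⟨part1, ?_⟩
  -- Part (ii)
  have clash : ∀ {s : ℕ → Z}, LMark a b a' b' x y s → RMark a b a' b' x y s → False :=
    fun hl hr => marks_clash haa' hab' hba' hbb' hax hay hbx hby
      ha'x ha'y hb'x hb'y hxy hl hr
  have gennn : ∀ {σ τ ρ : ℕ → Z}, Gen a b a' b' x y σ τ → Gen a b a' b' x y τ ρ → False :=
    fun h1 h2 => clash (gen_marks h2).1 (gen_marks h1).2
  refine ⟨fun σ τ => σ = τ ∨ Gen a b a' b' x y σ τ, fun σ => Or.inl rfl, ?_, ?_, ?_⟩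
  · -- transitive
    rintro σ τ ρ (rfl | h1) (rfl | h2)
    · exact Or.inl rfl
    · exact Or.inr h2
    · exact Or.inr h1
    · exact absurd (gennn h1 h2) not_false
  · -- stationary
    intro z σ τ
    refine ⟨?_, ?_⟩
    · rintro (rfl | h)
      · exact Or.inl rfl
      · exact Or.inr (Gen.pre z σ τ h)
    · rintro ⟨hw, hs⟩
      refine ⟨?_, ?_⟩
      · rcases hw with rfl | h
        · exact Or.inl rfl
        · exact Or.inr (Gen.pre z σ τ h)
      · rintro (heq | hgen)
        · obtain ⟨-, rfl⟩ := prepend_inj heq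
          exact hs (Or.inl rfl)
        · exact hs (Or.inr (gen_prepend_inv hab ha'b' z hgen))
  · -- no stationary complete preorder extension
    rintro ⟨R', ⟨hw, hs⟩, hrefl, htrans, hcomp, hstat⟩
    -- the four right-hand streams carry right marks
    have rm1 : RMark a b a' b' x y (prepend b fun _ => y) :=
      ⟨0, Or.inl ⟨Or.inr rfl, fun m hm => tail_const m hm⟩⟩
    have rm2 : RMark a b a' b' x y (prepend a fun _ => y) :=
      ⟨0, Or.inl ⟨Or.inl rfl, fun m hm => tail_const m hm⟩⟩
    have rm3 : RMark a b a' b' x y (prepend b' fun _ => x) :=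
      ⟨0, Or.inr ⟨Or.inr rfl, fun m hm => tail_const m hm⟩⟩
    have rm4 : RMark a b a' b' x y (prepend a' fun _ => x) :=
      ⟨0, Or.inr ⟨Or.inl rfl, fun m hm => tail_const m hm⟩⟩
    -- R₀ is strict on each generating pair
    have strict0 : ∀ (p q : ℕ → Z), Gen a b a' b' x y p q →
        (q 0 ≠ p 0) → RMark a b a' b' x y q →
        StrictRel (fun σ τ => σ = τ ∨ Gen a b a' b' x y σ τ) p q := by
      intro p q hg hne hrm
      refine ⟨Or.inr hg, ?_⟩
      rintro (heq | hgen)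
      · exact hne (congrFun heq 0)
      · exact clash (gen_marks hgen).1 hrm
    have s1 := hs _ _ (strict0 _ _ Gen.g1 (fun h => hab h.symm) rm1)
    have s2 := hs _ _ (strict0 _ _ Gen.g2 (fun h => hab h) rm2)
    have s3 := hs _ _ (strict0 _ _ Gen.g3 (fun h => ha'b' h.symm) rm3)
    have s4 := hs _ _ (strict0 _ _ Gen.g4 (fun h => ha'b' h) rm4)
    exact part1 ⟨R', hcomp, htrans, hstat, s1, s2, s3, s4⟩
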